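/- Let g₁,…,g_k (k ≥ 1) be pseudomonomials in R such that no two distinct g_{j₁}, g_{j₂} share any index and such that g_{j₁} does not divide g_{j₂} whenever j₁ ≠ j₂. Then the ideal J of R generated by g₁,…,g_k satisfies CF(J) = {g₁,…,g_k}; that is, this presentation of J is in canonical form. -/
import Mathlib


open MvPolynomial

/-- The pseudomonomial `∏_{i∈σ} xᵢ · ∏_{i∈τ} (1 - xᵢ)` in `F₂[x₁,…,xₙ]`. -/
noncomputable def psm (n : ℕ) (σ τ : Finset (Fin n)) : MvPolynomial (Fin n) (ZMod 2) :=
  (∏ i ∈ σ, X i) * ∏ i ∈ τ, (1 - X i)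

/-- A polynomial of `F₂[x₁,…,xₙ]` is a pseudomonomial if it has the form
`∏_{i∈σ} xᵢ · ∏_{i∈τ} (1 - xᵢ)` for disjoint `σ τ`. -/
def IsPseudomonomial {n : ℕ} (f : MvPolynomial (Fin n) (ZMod 2)) : Prop :=
  ∃ σ τ : Finset (Fin n), Disjoint σ τ ∧ f = psm n σ τ

/-- The canonical form of an ideal `J`: the set of minimal pseudomonomials of `J`,
i.e. pseudomonomials `f ∈ J` such that no pseudomonomial `g ≠ f` dividing `f` lies in `J`. -/
def CF {n : ℕ} (J : Ideal (MvPolynomial (Fin n) (ZMod 2))) :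
    Set (MvPolynomial (Fin n) (ZMod 2)) :=
  {f | IsPseudomonomial f ∧ f ∈ J ∧
    ∀ g : MvPolynomial (Fin n) (ZMod 2), IsPseudomonomial g → g ∣ f → g ≠ f → g ∉ J}

lemma zmod2_cases (a : ZMod 2) : a = 0 ∨ a = 1 := by revert a; decide

lemma eval_psm {n : ℕ} (p : Fin n → ZMod 2) (σ τ : Finset (Fin n)) :
    eval p (psm n σ τ) = (∏ i ∈ σ, p i) * ∏ i ∈ τ, (1 - p i) := by
  simp [psm]

lemma psm_dvd {n : ℕ} {σ' τ' σ τ : Finset (Fin n)} (hσ : σ' ⊆ σ) (hτ : τ' ⊆ τ) :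
    psm n σ' τ' ∣ psm n σ τ := by
  refine ⟨psm n (σ \ σ') (τ \ τ'), ?_⟩
  unfold psm
  rw [← Finset.prod_sdiff hσ, ← Finset.prod_sdiff hτ]
  ring

lemma dvd_subsets {n : ℕ} {σ' τ' σ τ : Finset (Fin n)} (hd : Disjoint σ τ)
    (h : psm n σ' τ' ∣ psm n σ τ) : σ' ⊆ σ ∧ τ' ⊆ τ := by
  obtain ⟨c, hc⟩ := h
  constructor
  · intro i hi
    by_contra hiσ
    set p : Fin n → ZMod 2 := fun j => if j ∈ σ then 1 else 0 with hp
    have h1 : eval p (psm n σ τ) = 1 := by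
      rw [eval_psm]
      rw [Finset.prod_eq_one, Finset.prod_eq_one, one_mul]
      · intro x hx
        have hx' : x ∉ σ := fun hx' => (Finset.disjoint_left.mp hd hx' hx)
        simp [hp, hx']
      · intro x hx; simp [hp, hx]
    have h2 : eval p (psm n σ' τ') = 0 := by
      rw [eval_psm]
      apply mul_eq_zero_of_left
      apply Finset.prod_eq_zero hi
      simp [hp, hiσ]
    have h3 := congrArg (eval p) hc
    rw [h1, map_mul, h2, zero_mul] at h3
    exact one_ne_zero h3
  · intro i hi
    by_contra hiτ
    set p : Fin n → ZMod 2 := fun j => if j ∈ σ ∪ {i} then 1 else 0 with hp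
    have h1 : eval p (psm n σ τ) = 1 := by
      rw [eval_psm]
      rw [Finset.prod_eq_one, Finset.prod_eq_one, one_mul]
      · intro x hx
        have hx1 : x ∉ σ := fun hx' => (Finset.disjoint_left.mp hd hx' hx)
        have hx2 : x ≠ i := fun h => hiτ (h ▸ hx)
        simp [hp, hx1, hx2]
      · intro x hx; simp [hp, hx]
    have h2 : eval p (psm n σ' τ') = 0 := by
      rw [eval_psm]
      apply mul_eq_zero_of_right
      apply Finset.prod_eq_zero hi
      simp [hp]
    have h3 := congrArg (eval p) hc
    rw [h1, map_mul, h2, zero_mul] at h3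
    exact one_ne_zero h3

lemma keyA {n k : ℕ} (σ τ : Fin k → Finset (Fin n)) (hdisj : ∀ j, Disjoint (σ j) (τ j))
    (hshare : ∀ j₁ j₂ : Fin k, j₁ ≠ j₂ → ∀ i : Fin n, ¬(i ∈ σ j₁ ∧ i ∈ τ j₂))
    {σ₀ τ₀ : Finset (Fin n)} (hd : Disjoint σ₀ τ₀)
    (hmem : psm n σ₀ τ₀ ∈ Ideal.span (Set.range (fun j => psm n (σ j) (τ j)))) :
    ∃ j, σ j ⊆ σ₀ ∧ τ j ⊆ τ₀ := by
  by_contra hcon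
  push_neg at hcon
  classical
  set p : Fin n → ZMod 2 := fun i =>
    if i ∈ τ₀ then 0 else if i ∈ σ₀ then 1 else if ∃ j, i ∈ σ j then 0 else 1 with hp
  have hgen : ∀ j, eval p (psm n (σ j) (τ j)) = 0 := by
    intro j
    rcases zmod2_cases (eval p (psm n (σ j) (τ j))) with h | h
    · exact h
    · exfalso
      rw [eval_psm] at h
      have hσ1 : ∀ i ∈ σ j, p i = 1 := by
        intro i hi
        rcases zmod2_cases (p i) with h0 | h1
        · exfalso
          rw [Finset.prod_eq_zero hi h0, zero_mul] at h
          exact zero_ne_one h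
        · exact h1
      have hτ0 : ∀ i ∈ τ j, p i = 0 := by
        intro i hi
        rcases zmod2_cases (p i) with h0 | h1
        · exact h0
        · exfalso
          have : (1 : ZMod 2) - p i = 0 := by rw [h1]; ring
          rw [Finset.prod_eq_zero hi this, mul_zero] at h
          exact zero_ne_one h
      have hσsub : σ j ⊆ σ₀ := by
        intro i hi
        have hpi := hσ1 i hi
        by_contra hiσ
        by_cases hiτ : i ∈ τ₀
        · simp [hp, hiτ] at hpi
        · have : p i = 0 := by simp [hp, hiτ, hiσ]; exact ⟨j, hi⟩
          rw [this] at hpi; exact zero_ne_one hpi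
      have hτsub : τ j ⊆ τ₀ := by
        intro i hi
        have hpi := hτ0 i hi
        by_contra hiτ
        by_cases hiσ : i ∈ σ₀
        · simp [hp, hiτ, hiσ] at hpi
        · by_cases hex : ∃ j', i ∈ σ j'
          · obtain ⟨j', hj'⟩ := hex
            by_cases hjj : j' = j
            · subst hjj
              exact Finset.disjoint_left.mp (hdisj j') hj' hi
            · exact hshare j' j hjj i ⟨hj', hi⟩
          · simp [hp, hiτ, hiσ, hex] at hpi
      exact hcon j hσsub hτsub
  have hle : Ideal.span (Set.range (fun j => psm n (σ j) (τ j))) ≤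
      RingHom.ker (eval p) := by
    rw [Ideal.span_le]
    rintro _ ⟨j, rfl⟩
    exact hgen j
  have hf0 : eval p (psm n σ₀ τ₀) = 0 := hle hmem
  have hf1 : eval p (psm n σ₀ τ₀) = 1 := by
    rw [eval_psm]
    rw [Finset.prod_eq_one, Finset.prod_eq_one, one_mul]
    · intro x hx; simp [hp, hx]
    · intro x hx
      have hx' : x ∉ τ₀ := fun h => Finset.disjoint_left.mp hd hx h
      simp [hp, hx', hx]
  rw [hf0] at hf1
  exact zero_ne_one hf1

/-- If no two distinct generators share any index and no generator divides another, the
presentation is in canonical form. -/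
theorem stmt2 {n k : ℕ} (hn : 0 < n) (hk : 1 ≤ k)
    (σ τ : Fin k → Finset (Fin n))
    (hdisj : ∀ j, Disjoint (σ j) (τ j))
    (g : Fin k → MvPolynomial (Fin n) (ZMod 2))
    (hg : ∀ j, g j = psm n (σ j) (τ j))
    (hshare : ∀ j₁ j₂ : Fin k, j₁ ≠ j₂ →
      ∀ i : Fin n, i ∉ (σ j₁ ∩ τ j₂) ∪ (σ j₂ ∩ τ j₁))
    (hnd : ∀ j₁ j₂ : Fin k, j₁ ≠ j₂ → ¬ g j₁ ∣ g j₂) :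
    CF (Ideal.span (Set.range g)) = Set.range g := by
  classical
  have hgeq : g = fun j => psm n (σ j) (τ j) := funext hg
  subst hgeq
  have hshare' : ∀ j₁ j₂ : Fin k, j₁ ≠ j₂ → ∀ i : Fin n, ¬(i ∈ σ j₁ ∧ i ∈ τ j₂) := by
    intro j₁ j₂ hne i hi
    exact hshare j₁ j₂ hne i
      (Finset.mem_union_left _ (Finset.mem_inter.mpr ⟨hi.1, hi.2⟩))
  ext f
  constructor
  · rintro ⟨⟨σ₀, τ₀, hd, rfl⟩, hmem, hmin⟩
    obtain ⟨j, hj1, hj2⟩ := keyA σ τ hdisj hshare' hd hmem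
    have hdvd : psm n (σ j) (τ j) ∣ psm n σ₀ τ₀ := psm_dvd hj1 hj2
    by_cases heq : psm n (σ j) (τ j) = psm n σ₀ τ₀
    · exact ⟨j, heq⟩
    · exact absurd (Ideal.subset_span (Set.mem_range_self j))
        (hmin _ ⟨σ j, τ j, hdisj j, rfl⟩ hdvd heq)
  · rintro ⟨j, rfl⟩
    refine ⟨⟨σ j, τ j, hdisj j, rfl⟩, Ideal.subset_span (Set.mem_range_self j), ?_⟩
    rintro h ⟨σ', τ', hd', rfl⟩ hdvd hne hmemh
    obtain ⟨j', hj'1, hj'2⟩ := keyA σ τ hdisj hshare' hd' hmemh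
    have h1 : psm n (σ j') (τ j') ∣ psm n σ' τ' := psm_dvd hj'1 hj'2
    by_cases hjj : j' = j
    · subst hjj
      obtain ⟨hs, ht⟩ := dvd_subsets (hdisj j') hdvd
      exact hne (by rw [Finset.Subset.antisymm hs hj'1, Finset.Subset.antisymm ht hj'2])
    · exact hnd j' j hjj (h1.trans hdvd)
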